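/- Let m ≥ 2 be an integer, δ = 3/(m−1), and let A_0, A_1, …, A_{2m+1} ⊆ ℝ² be the sets of the explicit construction: A_0 = A_{2m+1} = {(0,0)}; A_i = V(3−(i−1)δ, 1) ∪ H(4−(i−1)δ, 0) ∪ Q(4.5−(i−1)δ, 1.5) for i ∈ {1, …, m}; and A_i = the reflection of A_{2m+1−i} across the line x = y for i ∈ {m+1, …, 2m}. Then A_0, A_1, …, A_{2m+1} is a grid-like sequence for n = 2m+1: each A_i is closed, A_0 = {0}, A_{2m+1} = {(0,0)}, and for every i ∈ {1, …, 2m} and every a ∈ ℝ², the closed Euclidean unit disk a + B intersects A_i. -/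

import Mathlib

open Real

/-- North strip `N(a,b) = {(x,y) : −a ≤ x ≤ a, y ≥ b}`. -/
def Nset (a b : ℝ) : Set (EuclideanSpace ℝ (Fin 2)) :=
  {p | -a ≤ p 0 ∧ p 0 ≤ a ∧ b ≤ p 1}

/-- South strip `S(a,b) = {(x,y) : −a ≤ x ≤ a, y ≤ b}`. -/
def Sset (a b : ℝ) : Set (EuclideanSpace ℝ (Fin 2)) :=
  {p | -a ≤ p 0 ∧ p 0 ≤ a ∧ p 1 ≤ b}

/-- East strip `E(c,d) = {(x,y) : x ≥ c, −d ≤ y ≤ d}`. -/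
def Eset (c d : ℝ) : Set (EuclideanSpace ℝ (Fin 2)) :=
  {p | c ≤ p 0 ∧ -d ≤ p 1 ∧ p 1 ≤ d}

/-- West strip `W(c,d) = {(x,y) : x ≤ c, −d ≤ y ≤ d}`. -/
def Wset (c d : ℝ) : Set (EuclideanSpace ℝ (Fin 2)) :=
  {p | p 0 ≤ c ∧ -d ≤ p 1 ∧ p 1 ≤ d}

/-- Corner `Q^{NW}(e,f) = {(x,y) : x ≤ e, y ≥ f}`. -/
def QNWset (e f : ℝ) : Set (EuclideanSpace ℝ (Fin 2)) := {p | p 0 ≤ e ∧ f ≤ p 1}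

/-- Corner `Q^{NE}(e,f) = {(x,y) : x ≥ e, y ≥ f}`. -/
def QNEset (e f : ℝ) : Set (EuclideanSpace ℝ (Fin 2)) := {p | e ≤ p 0 ∧ f ≤ p 1}

/-- Corner `Q^{SW}(e,f) = {(x,y) : x ≤ e, y ≤ f}`. -/
def QSWset (e f : ℝ) : Set (EuclideanSpace ℝ (Fin 2)) := {p | p 0 ≤ e ∧ p 1 ≤ f}

/-- Corner `Q^{SE}(e,f) = {(x,y) : x ≥ e, y ≤ f}`. -/
def QSEset (e f : ℝ) : Set (EuclideanSpace ℝ (Fin 2)) := {p | e ≤ p 0 ∧ p 1 ≤ f}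

/-- Vertical part `V(a,b) = N(a,b) ∪ S(a,−b)`. -/
def Vset (a b : ℝ) : Set (EuclideanSpace ℝ (Fin 2)) := Nset a b ∪ Sset a (-b)

/-- Horizontal part `H(c,d) = E(c,d) ∪ W(−c,d)`. -/
def Hset (c d : ℝ) : Set (EuclideanSpace ℝ (Fin 2)) := Eset c d ∪ Wset (-c) d

/-- Union of corners
`Q(e,f) = Q^{NW}(−e,f) ∪ Q^{NE}(e,f) ∪ Q^{SW}(−e,−f) ∪ Q^{SE}(e,−f)`. -/
def Qset (e f : ℝ) : Set (EuclideanSpace ℝ (Fin 2)) :=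
  QNWset (-e) f ∪ QNEset e f ∪ QSWset (-e) (-f) ∪ QSEset e (-f)

/-- Reflection of the plane across the line `x = y`. -/
def reflXY (p : EuclideanSpace ℝ (Fin 2)) : EuclideanSpace ℝ (Fin 2) := WithLp.toLp 2 ![p 1, p 0]

/-!
With `a = 3 - (i - 1) δ ≥ 0`, the set `A i` for `i ≤ m` is `V(a, 1) ∪ H(a + 1, 0) ∪ Q(a + 1.5, 1.5)`.
It is symmetric under `x ↦ -x` and `y ↦ -y`, so it meets the unit disk around `p` as soon as its
first-quadrant part (the strip `x ≤ a, y ≥ 1`, the ray `x ≥ a + 1, y = 0` and the quadrant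
`x ≥ a + 1.5, y ≥ 1.5`) meets the unit disk around `(|p₀|, |p₁|)`, which a short case analysis
shows. For `i > m`, `A i` is the image of such a set under the reflection in the diagonal, an
isometry of the plane.
-/

open Metric Set

def InQuadrantPart (a x y : ℝ) : Prop :=
  x ≤ a ∧ 1 ≤ y ∨ a + 1 ≤ x ∧ y = 0 ∨ a + 1.5 ≤ x ∧ 1.5 ≤ y

def barsAndCorners (a : ℝ) : Set (EuclideanSpace ℝ (Fin 2)) :=
  Vset a 1 ∪ Hset (a + 1) 0 ∪ Qset (a + 1.5) 1.5

theorem mem_barsAndCorners_iff {a : ℝ} {p : EuclideanSpace ℝ (Fin 2)} :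
    p ∈ barsAndCorners a ↔ InQuadrantPart a |p 0| |p 1| := by
  simp only [barsAndCorners, InQuadrantPart, Vset, Hset, Qset, Nset, Sset, Eset, Wset, QNWset,
    QNEset, QSWset, QSEset, mem_union, mem_ofPred_eq, abs_le, le_abs', abs_eq_zero]
  grind

theorem isClosed_barsAndCorners (a : ℝ) : IsClosed (barsAndCorners a) := by
  rw [show barsAndCorners a = {p | InQuadrantPart a |p 0| |p 1|} from
    ext fun _ => mem_barsAndCorners_iff]
  simp only [InQuadrantPart, ofPred_or, ofPred_and]
  apply_rules [IsClosed.union, IsClosed.inter, isClosed_le, isClosed_eq] <;> fun_prop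

theorem exists_inQuadrantPart_sq_dist_le_one {a u v : ℝ} (ha : 0 ≤ a) (hu : 0 ≤ u)
    (hv : 0 ≤ v) :
    ∃ x y, 0 ≤ x ∧ 0 ≤ y ∧ InQuadrantPart a x y ∧ (u - x) ^ 2 + (v - y) ^ 2 ≤ 1 := by
  rcases le_total v 1 with hv1 | hv1
  · -- in the unit square `[a, a + 1] × [0, 1]` the diagonal `u - a = v` separates the points
    -- closer to `(a, 1)` from those closer to `(a + 1, 0)`
    by_cases hua : u - a ≤ v
    · refine ⟨min u a, 1, by positivity, zero_le_one, .inl ⟨min_le_right _ _, le_rfl⟩, ?_⟩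
      rcases min_cases u a with ⟨h, _⟩ | ⟨h, _⟩ <;> rw [h] <;> nlinarith
    · refine ⟨max u (a + 1), 0, by positivity, le_rfl, .inr (.inl ⟨le_max_right _ _, rfl⟩), ?_⟩
      rcases max_cases u (a + 1) with ⟨h, _⟩ | ⟨h, _⟩ <;> rw [h] <;> nlinarith
  · by_cases hua : u ≤ a + 1
    · refine ⟨min u a, v, by positivity, hv, .inl ⟨min_le_right _ _, hv1⟩, ?_⟩
      rcases min_cases u a with ⟨h, _⟩ | ⟨h, _⟩ <;> rw [h] <;> nlinarith
    · refine ⟨max u (a + 1.5), max v 1.5, by positivity, by positivity,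
        .inr (.inr ⟨le_max_right _ _, le_max_right _ _⟩), ?_⟩
      rcases max_cases u (a + 1.5) with ⟨h, _⟩ | ⟨h, _⟩ <;>
        rcases max_cases v 1.5 with ⟨h', _⟩ | ⟨h', _⟩ <;> rw [h, h'] <;> nlinarith

theorem exists_abs_eq_and_sub_sq_eq {x : ℝ} (hx : 0 ≤ x) (t : ℝ) :
    ∃ s, |s| = x ∧ (t - s) ^ 2 = (|t| - x) ^ 2 := by
  rcases le_total 0 t with ht | ht
  · exact ⟨x, abs_of_nonneg hx, by rw [abs_of_nonneg ht]⟩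
  · exact ⟨-x, by rw [abs_neg, abs_of_nonneg hx], by rw [abs_of_nonpos ht]; ring⟩

theorem Metric.isCover_univ_iff {X : Type*} [PseudoMetricSpace X] {ε : NNReal} {N : Set X} :
    IsCover ε univ N ↔ ∀ x, ∃ y ∈ N, dist x y ≤ ε := by
  simp [isCover_iff_subset_iUnion_closedEBall, subset_def]

theorem Metric.IsCover.image_univ_of_isometry {X Y : Type*} [PseudoEMetricSpace X]
    [PseudoEMetricSpace Y] {ε : NNReal} {N : Set X} {f : X → Y} (h : IsCover ε univ N)
    (hf : Isometry f) (hsurj : Function.Surjective f) : IsCover ε univ (f '' N) := by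
  rw [← image_univ_of_surjective hsurj]
  exact (hf.isCover_image_iff N).2 h

theorem isCover_barsAndCorners {a : ℝ} (ha : 0 ≤ a) : IsCover 1 univ (barsAndCorners a) := by
  refine isCover_univ_iff.2 fun p => ?_
  obtain ⟨x, y, hx, hy, hxy, hdist⟩ :=
    exists_inQuadrantPart_sq_dist_le_one ha (abs_nonneg (p 0)) (abs_nonneg (p 1))
  obtain ⟨s, hs, hsp⟩ := exists_abs_eq_and_sub_sq_eq hx (p 0)
  obtain ⟨t, ht, htp⟩ := exists_abs_eq_and_sub_sq_eq hy (p 1)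
  refine ⟨!₂[s, t], mem_barsAndCorners_iff.2 (by simpa [hs, ht]), ?_⟩
  rw [NNReal.coe_one, EuclideanSpace.dist_eq, Real.sqrt_le_one, Fin.sum_univ_two]
  simp only [Real.dist_eq, sq_abs, Matrix.cons_val_zero, Matrix.cons_val_one,
    Matrix.cons_val_fin_one]
  rw [hsp, htp]
  exact hdist

theorem reflXY_eq_piLpCongrLeft :
    reflXY = LinearIsometryEquiv.piLpCongrLeft 2 ℝ ℝ (Equiv.swap (0 : Fin 2) 1) := by
  ext p i
  fin_cases i <;> simp [reflXY, Equiv.piCongrLeft']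

theorem union_eq_barsAndCorners (c : ℝ) :
    Vset (3 - c) 1 ∪ Hset (4 - c) 0 ∪ Qset (4.5 - c) 1.5 = barsAndCorners (3 - c) := by
  unfold barsAndCorners
  congr 3 <;> norm_num <;> ring

theorem sub_one_mul_three_div_le_three {m i : ℕ} (hm : 2 ≤ m) (him : i ≤ m) :
    ((i : ℝ) - 1) * (3 / ((m : ℝ) - 1)) ≤ 3 := by
  have hm' : (1 : ℝ) < m := by exact_mod_cast hm
  have him' : (i : ℝ) ≤ m := by exact_mod_cast him
  rw [mul_div_assoc', div_le_iff₀ (by linarith)]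
  nlinarith

/-- The explicit construction `A 0, …, A (2m+1)` of Theorem 3 is a grid-like
sequence for `n = 2m+1`: each `A i` is closed, `A 0 = A (2m+1) = {0}`, and for every
`i ∈ {1,…,2m}` every translate of the closed Euclidean unit disk meets `A i`. -/
theorem construction_is_gridlike (m : ℕ) (hm : 2 ≤ m) (δ : ℝ)
    (hδ : δ = 3 / ((m : ℝ) - 1))
    (A : ℕ → Set (EuclideanSpace ℝ (Fin 2)))
    (hA0 : A 0 = {0}) (hAlast : A (2 * m + 1) = {0})
    (hAfirst : ∀ i, 1 ≤ i → i ≤ m →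
      A i = Vset (3 - ((i : ℝ) - 1) * δ) 1 ∪ Hset (4 - ((i : ℝ) - 1) * δ) 0 ∪
        Qset (4.5 - ((i : ℝ) - 1) * δ) 1.5)
    (hAsecond : ∀ i, m + 1 ≤ i → i ≤ 2 * m → A i = reflXY '' A (2 * m + 1 - i)) :
    (∀ i, i ≤ 2 * m + 1 → IsClosed (A i)) ∧
    A 0 = {0} ∧ A (2 * m + 1) = {0} ∧
    (∀ i, 1 ≤ i → i ≤ 2 * m → ∀ p : EuclideanSpace ℝ (Fin 2),
      ∃ q ∈ A i, ‖q - p‖ ≤ 1) := by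
  subst hδ
  have lower : ∀ i, 1 ≤ i → i ≤ m → IsClosed (A i) ∧ IsCover 1 univ (A i) := by
    intro i hi him
    rw [hAfirst i hi him, union_eq_barsAndCorners]
    exact ⟨isClosed_barsAndCorners _,
      isCover_barsAndCorners (sub_nonneg.2 (sub_one_mul_three_div_le_three hm him))⟩
  have inner : ∀ i, 1 ≤ i → i ≤ 2 * m → IsClosed (A i) ∧ IsCover 1 univ (A i) := by
    intro i hi hi'
    rcases le_or_gt i m with him | him
    · exact lower i hi him
    obtain ⟨hclosed, hcover⟩ := lower (2 * m + 1 - i) (by omega) (by omega)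
    set e := LinearIsometryEquiv.piLpCongrLeft 2 ℝ ℝ (Equiv.swap (0 : Fin 2) 1)
    rw [hAsecond i (by omega) hi', reflXY_eq_piLpCongrLeft]
    exact ⟨e.toHomeomorph.isClosed_image.2 hclosed,
      hcover.image_univ_of_isometry e.isometry e.surjective⟩
  refine ⟨fun i hi => ?_, hA0, hAlast, fun i hi hi' p => ?_⟩
  · rcases Nat.eq_zero_or_pos i with rfl | hpos
    · exact hA0 ▸ isClosed_singleton
    rcases hi.lt_or_eq with hi | rfl
    · exact (inner i hpos (by omega)).1
    · exact hAlast ▸ isClosed_singleton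
  · obtain ⟨q, hq, hpq⟩ := isCover_univ_iff.1 (inner i hi hi').2 p
    exact ⟨q, hq, by rwa [← dist_eq_norm, dist_comm]⟩
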